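/- (Theorem 2, RSU upper bound.) Let D be a finite database of q-sequences, let t' be a sequence with at least two item occurrences, and let t be a sequence such that t' is an extension-prefix of t or t' = t. Then u(t) ≤ RSU(t'), where u(t) = Σ_{s∈D, t⊑s} u(t,s) and RSU(t') = Σ_{s∈D, t'⊑s} RSU(t',s). -/

import Mathlib

open scoped Classical

namespace TKUS

variable {I : Type*} [Fintype I] [LinearOrder I]

/-- `p` is the (0-based) position list of an instance of the sequence `t`
in the q-sequence `s`. -/
def IsInstance (s : List (I →₀ ℕ)) (t : List (Finset I)) (p : List ℕ) : Prop :=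
  p.length = t.length ∧ p.Chain' (· < ·) ∧
    ∀ v < t.length, p.getD v 0 < s.length ∧
      ∀ i ∈ t.getD v ∅, 0 < s.getD (p.getD v 0) 0 i

/-- `t ⊑ s` : `t` has at least one instance in `s`. -/
def Contains (s : List (I →₀ ℕ)) (t : List (Finset I)) : Prop :=
  ∃ p, IsInstance s t p

/-- `u(t,p,s)` : utility of `t` at position `p` in `s`. -/
def uPos (eu : I → ℝ) (s : List (I →₀ ℕ)) (t : List (Finset I)) (p : List ℕ) : ℝ :=
  ∑ v ∈ Finset.range t.length, ∑ i ∈ t.getD v ∅,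
    (s.getD (p.getD v 0) 0 i : ℝ) * eu i

/-- `u(t,s)` : the maximum utility over all instances of `t` in `s` (`0` if none). -/
noncomputable def uSeq (eu : I → ℝ) (s : List (I →₀ ℕ)) (t : List (Finset I)) : ℝ :=
  sSup {x | ∃ p, IsInstance s t p ∧ x = uPos eu s t p}

/-- the greatest item of the last itemset of `t`, as an element of `WithBot I`. -/
def iLast (t : List (Finset I)) : WithBot I :=
  (t.getLast?.getD ∅).max

/-- `u_rest(t,k,s)` : remaining utility of `t` at extension position `k` in `s`. -/
def uRest (eu : I → ℝ) (s : List (I →₀ ℕ)) (t : List (Finset I)) (k : ℕ) : ℝ :=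
  ∑ j ∈ Finset.range s.length, ∑ i ∈ (s.getD j 0).support,
    if k < j ∨ (j = k ∧ iLast t < (i : WithBot I)) then (s.getD j 0 i : ℝ) * eu i else 0

/-- `k` is an extension position of `t` in `s`. -/
def ExtPos (s : List (I →₀ ℕ)) (t : List (Finset I)) (k : ℕ) : Prop :=
  ∃ p, IsInstance s t p ∧ p.getLast?.getD 0 = k

/-- the pivot : the least extension position of `t` in `s`. -/
noncomputable def pivot (s : List (I →₀ ℕ)) (t : List (Finset I)) : ℕ :=
  sInf {k | ExtPos s t k}

/-- `u_rest(t,s)` : remaining utility of `t` at the pivot. -/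
noncomputable def uRestSeq (eu : I → ℝ) (s : List (I →₀ ℕ)) (t : List (Finset I)) : ℝ :=
  uRest eu s t (pivot s t)

/-- `PEU(t,p,s)`. -/
noncomputable def PEUpos (eu : I → ℝ) (s : List (I →₀ ℕ)) (t : List (Finset I))
    (p : List ℕ) : ℝ :=
  if 0 < uRest eu s t (p.getLast?.getD 0) then
    uPos eu s t p + uRest eu s t (p.getLast?.getD 0)
  else 0

/-- `PEU(t,s)` : maximum of `PEU(t,p,s)` over all instances. -/
noncomputable def PEUseq (eu : I → ℝ) (s : List (I →₀ ℕ)) (t : List (Finset I)) : ℝ :=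
  sSup {x | ∃ p, IsInstance s t p ∧ x = PEUpos eu s t p}

/-- `t'` is an extension-prefix of `t` : `t' = ⟨X₁,…,X_{r−1}, X'_r⟩` where
`X'_r` is a nonempty lower segment of `X_r`. -/
def ExtPrefix (t' t : List (Finset I)) : Prop :=
  t' ≠ [] ∧ t'.length ≤ t.length ∧
    (∀ v, v + 1 < t'.length → t'.getD v ∅ = t.getD v ∅) ∧
    (t'.getD (t'.length - 1) ∅).Nonempty ∧
    t'.getD (t'.length - 1) ∅ ⊆ t.getD (t'.length - 1) ∅ ∧
    ∀ a ∈ t.getD (t'.length - 1) ∅ \ t'.getD (t'.length - 1) ∅,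
      ∀ b ∈ t'.getD (t'.length - 1) ∅, b < a

/-- `t'` is a proper extension-prefix of `t`. -/
def ProperExtPrefix (t' t : List (Finset I)) : Prop :=
  ExtPrefix t' t ∧ t' ≠ t

/-- the length (total number of item occurrences) of a sequence. -/
def seqLen (t : List (Finset I)) : ℕ :=
  (t.map Finset.card).sum

/-- remove the greatest item from a finite itemset. -/
def delMax (X : Finset I) : Finset I :=
  X.filter fun i => (i : WithBot I) ≠ X.max

/-- the parent of a sequence: delete the greatest item of the last itemset
(dropping that itemset entirely if it becomes empty). -/
def parent (t : List (Finset I)) : List (Finset I) :=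
  match t.getLast? with
  | none => []
  | some X => if delMax X = ∅ then t.dropLast else t.dropLast ++ [delMax X]

/-- `u(s)` : utility of a whole q-sequence. -/
def uQ (eu : I → ℝ) (s : List (I →₀ ℕ)) : ℝ :=
  ∑ j ∈ Finset.range s.length, ∑ i ∈ (s.getD j 0).support,
    (s.getD j 0 i : ℝ) * eu i

/-- `u(t)` : utility of `t` in a database `D`. -/
noncomputable def uDB (eu : I → ℝ) (D : Multiset (List (I →₀ ℕ)))
    (t : List (Finset I)) : ℝ :=
  (D.map fun s => if Contains s t then uSeq eu s t else 0).sum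

/-- `PEU(t)` over a database. -/
noncomputable def PEUDB (eu : I → ℝ) (D : Multiset (List (I →₀ ℕ)))
    (t : List (Finset I)) : ℝ :=
  (D.map fun s => if Contains s t then PEUseq eu s t else 0).sum

/-- `RSU(t,s)`. -/
noncomputable def RSUseq (eu : I → ℝ) (s : List (I →₀ ℕ)) (t : List (Finset I)) : ℝ :=
  if Contains s t then PEUseq eu s (parent t) else 0

/-- `RSU(t)` over a database. -/
noncomputable def RSUDB (eu : I → ℝ) (D : Multiset (List (I →₀ ℕ)))
    (t : List (Finset I)) : ℝ :=
  (D.map fun s => RSUseq eu s t).sum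

/-- `SWU(t)` over a database. -/
noncomputable def SWUDB (eu : I → ℝ) (D : Multiset (List (I →₀ ℕ)))
    (t : List (Finset I)) : ℝ :=
  (D.map fun s => if Contains s t then uQ eu s else 0).sum

/-- `SEU(t)` over a database. -/
noncomputable def SEUDB (eu : I → ℝ) (D : Multiset (List (I →₀ ℕ)))
    (t : List (Finset I)) : ℝ :=
  (D.map fun s => if Contains s t then uSeq eu s t + uRestSeq eu s t else 0).sum

/-- `t' ⊴ t` : `t'` is a subsequence of `t`. -/
def Subseq (t' t : List (Finset I)) : Prop :=
  ∃ p : List ℕ, p.length = t'.length ∧ p.Chain' (· < ·) ∧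
    ∀ v < t'.length, p.getD v 0 < t.length ∧ t'.getD v ∅ ⊆ t.getD (p.getD v 0) ∅

/-- `t` is a top-k HUSP with respect to the candidate set `C`. -/
def IsTopK (eu : I → ℝ) (D : Multiset (List (I →₀ ℕ))) (k : ℕ)
    (C : Finset (List (Finset I))) (t : List (Finset I)) : Prop :=
  t ∈ C ∧ (C.filter fun r => uDB eu D t < uDB eu D r).card < k

set_option linter.unusedSectionVars false
set_option linter.unusedVariables false

lemma getD_lt_getD {p : List ℕ} (hp : p.Chain' (· < ·)) {a b : ℕ}
    (hab : a < b) (hb : b < p.length) : p.getD a 0 < p.getD b 0 := by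
  have hpair := List.isChain_iff_pairwise.mp hp
  rw [List.pairwise_iff_getElem] at hpair
  have ha : a < p.length := lt_trans hab hb
  rw [List.getD_eq_getElem p 0 ha, List.getD_eq_getElem p 0 hb]
  exact hpair a b ha hb hab

lemma sum_comp_le {A B : Finset ((_ : ℕ) × I)} (g : ((_ : ℕ) × I) → ℝ)
    (e : ((_ : ℕ) × I) → ((_ : ℕ) × I))
    (hinj : ∀ x ∈ A, ∀ y ∈ A, e x = e y → x = y)
    (hmem : ∀ x ∈ A, e x ∈ B) (hg : ∀ x ∈ B, 0 ≤ g x) :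
    ∑ x ∈ A, g (e x) ≤ ∑ x ∈ B, g x := by
  rw [← Finset.sum_image hinj]
  exact Finset.sum_le_sum_of_subset_of_nonneg
    (fun y hy => by obtain ⟨x, hx, rfl⟩ := Finset.mem_image.mp hy; exact hmem x hx)
    (fun x hx _ => hg x hx)

lemma isInstance_take {s : List (I →₀ ℕ)} {t α : List (Finset I)} {p : List ℕ}
    (hp : IsInstance s t p) (hle : α.length ≤ t.length)
    (hsub : ∀ v < α.length, α.getD v ∅ ⊆ t.getD v ∅) :
    IsInstance s α (p.take α.length) := by
  obtain ⟨hlen, hch, hcond⟩ := hp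
  have hgetD : ∀ v < α.length, (p.take α.length).getD v 0 = p.getD v 0 := by
    intro v hv
    simp [List.getD_eq_getElem?_getD, List.getElem?_take, hv]
  refine ⟨?_, ?_, ?_⟩
  · rw [List.length_take, hlen]; omega
  · exact List.isChain_iff_pairwise.mpr
      (((List.isChain_iff_pairwise.mp hch)).sublist (List.take_sublist _ _))
  · intro v hv
    rw [hgetD v hv]
    exact ⟨(hcond v (lt_of_lt_of_le hv hle)).1,
      fun i hi => (hcond v (lt_of_lt_of_le hv hle)).2 i (hsub v hv hi)⟩

lemma getLast_take {p : List ℕ} {q : ℕ} (h1 : 1 ≤ q) (h2 : q ≤ p.length) :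
    (p.take q).getLast?.getD 0 = p.getD (q - 1) 0 := by
  rw [List.getLast?_eq_getElem?, List.length_take, List.getD_eq_getElem?_getD,
    List.getElem?_take]
  have hm : min q p.length = q := min_eq_left h2
  rw [hm, if_pos (by omega : q - 1 < q)]


lemma parent_spec {t' t : List (Finset I)} (ht' : ∀ X ∈ t', X.Nonempty)
    (h2 : 2 ≤ seqLen t') (hpre : ExtPrefix t' t) :
    1 ≤ (parent t').length ∧ (parent t').length ≤ t'.length ∧
    (∀ v < (parent t').length, (parent t').getD v ∅ ⊆ t.getD v ∅) ∧
    (∀ v < (parent t').length, ∀ i ∈ t.getD v ∅, i ∉ (parent t').getD v ∅ →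
      v = (parent t').length - 1 ∧ iLast (parent t') < (i : WithBot I)) ∧
    (∃ v i, v < t'.length ∧ i ∈ t.getD v ∅ ∧
      ¬(v < (parent t').length ∧ i ∈ (parent t').getD v ∅)) := by
  obtain ⟨hne, hlen, heq, hX0, hsubX, hdiff⟩ := hpre
  set r := t'.length with hrdef
  have hr1 : 1 ≤ r := List.length_pos_iff.mpr hne
  set X := t'.getD (r - 1) ∅ with hXdef
  have hXlast : t'.getLast? = some X := by
    rw [List.getLast?_eq_getElem?, hXdef, List.getD_eq_getElem t' ∅ (by omega : r - 1 < t'.length)]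
    exact List.getElem?_eq_getElem _
  have hpar : parent t' = if delMax X = ∅ then t'.dropLast else t'.dropLast ++ [delMax X] := by
    rw [parent, hXlast]
  have hdropD : ∀ v, v < r - 1 → t'.dropLast.getD v ∅ = t.getD v ∅ := by
    intro v hv
    have h1 : v < t'.dropLast.length := by rw [List.length_dropLast]; omega
    rw [List.getD_eq_getElem _ ∅ h1, List.getElem_dropLast,
      ← List.getD_eq_getElem t' ∅ (by omega : v < t'.length)]
    exact heq v (by omega)
  have hdM : delMax X ⊆ X := Finset.filter_subset _ _
  by_cases hcase : delMax X = ∅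
  · -- singleton last itemset, parent = dropLast
    have hall : ∀ i ∈ X, (i : WithBot I) = X.max := by
      intro i hi
      simp only [delMax] at hcase
      have := Finset.filter_eq_empty_iff.mp hcase hi
      exact not_not.mp this
    have hcard : X.card ≤ 1 :=
      Finset.card_le_one.mpr fun x hx y hy =>
        WithBot.coe_injective ((hall x hx).trans (hall y hy).symm)
    have hr2 : 2 ≤ r := by
      by_contra hcon
      have hr : r = 1 := by omega
      obtain ⟨a, ha⟩ := List.length_eq_one_iff.mp hr
      have hXa : X = a := by rw [hXdef, hr, ha]; rfl
      have hseq : seqLen t' = a.card := by rw [ha]; simp [seqLen]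
      rw [hXa] at hcard
      omega
    rw [hpar, if_pos hcase]
    have hlen' : t'.dropLast.length = r - 1 := List.length_dropLast
    refine ⟨by omega, by omega, ?_, ?_, ?_⟩
    · intro v hv
      rw [hdropD v (by omega)]
    · intro v hv i hi hni
      rw [hlen'] at hv
      rw [hdropD v hv] at hni
      exact absurd hi hni
    · obtain ⟨m, hm⟩ := hX0
      exact ⟨r - 1, m, by omega, hsubX hm, fun h => by rw [hlen'] at h; omega⟩
  · -- parent = dropLast ++ [delMax X]
    rw [hpar, if_neg hcase]
    have hlen' : (t'.dropLast ++ [delMax X]).length = r := by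
      simp [List.length_dropLast]; omega
    have hgetlast : (t'.dropLast ++ [delMax X]).getD (r - 1) ∅ = delMax X := by
      rw [List.getD_eq_getElem _ ∅ (by omega : r - 1 < _)]
      exact List.getElem_concat_length (by simp; omega) _
    have hgetv : ∀ v, v < r - 1 → (t'.dropLast ++ [delMax X]).getD v ∅ = t.getD v ∅ := by
      intro v hv
      have h1 : v < t'.dropLast.length := by rw [List.length_dropLast]; omega
      rw [List.getD_eq_getElem _ ∅ (by omega : v < _), List.getElem_append_left h1,
        ← List.getD_eq_getElem t'.dropLast ∅ h1]
      exact hdropD v hv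
    have hilast : iLast (t'.dropLast ++ [delMax X]) = (delMax X).max := by
      rw [iLast, List.getLast?_concat]; rfl
    refine ⟨by omega, by omega, ?_, ?_, ?_⟩
    · intro v hv
      rw [hlen'] at hv
      rcases Nat.lt_or_ge v (r - 1) with h | h
      · rw [hgetv v h]
      · have hv1 : v = r - 1 := by omega
        subst hv1
        rw [hgetlast]
        exact fun i hi => hsubX (hdM hi)
    · intro v hv i hi hni
      rw [hlen'] at hv ⊢
      rcases Nat.lt_or_ge v (r - 1) with h | h
      · rw [hgetv v h] at hni; exact absurd hi hni
      · have hv1 : v = r - 1 := by omega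
        subst hv1
        rw [hgetlast] at hni
        refine ⟨rfl, ?_⟩
        rw [hilast]
        obtain ⟨mm, hmm⟩ := Finset.max_of_nonempty (Finset.nonempty_iff_ne_empty.mpr hcase)
        rw [hmm, WithBot.coe_lt_coe]
        have hmmX : mm ∈ delMax X := Finset.mem_of_max hmm
        have hmmX' : mm ∈ X := hdM hmmX
        by_cases hiX : i ∈ X
        · have hiM : (i : WithBot I) = X.max := by
            by_contra hcon
            exact hni (Finset.mem_filter.mpr ⟨hiX, hcon⟩)
          have h1 : (mm : WithBot I) ≤ X.max := Finset.le_max hmmX'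
          have h2 : (mm : WithBot I) ≠ X.max := (Finset.mem_filter.mp hmmX).2
          rw [← hiM] at h1 h2
          exact WithBot.coe_lt_coe.mp (lt_of_le_of_ne h1 h2)
        · exact hdiff i (Finset.mem_sdiff.mpr ⟨hi, hiX⟩) mm hmmX'
    · obtain ⟨m, hm⟩ := Finset.max_of_nonempty hX0
      have hmX : m ∈ X := Finset.mem_of_max hm
      refine ⟨r - 1, m, by omega, hsubX hmX, fun h => ?_⟩
      rw [hgetlast] at h
      exact (Finset.mem_filter.mp h.2).2 hm.symm


def sigT (t : List (Finset I)) : Finset ((_ : ℕ) × I) :=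
  (Finset.range t.length).sigma fun v => t.getD v ∅

def sigS (s : List (I →₀ ℕ)) : Finset ((_ : ℕ) × I) :=
  (Finset.range s.length).sigma fun j => (s.getD j 0).support

def gfun (eu : I → ℝ) (s : List (I →₀ ℕ)) : ((_ : ℕ) × I) → ℝ :=
  fun x => (s.getD x.1 0 x.2 : ℝ) * eu x.2

lemma mem_sigT {t : List (Finset I)} {x : (_ : ℕ) × I} :
    x ∈ sigT t ↔ x.1 < t.length ∧ x.2 ∈ t.getD x.1 ∅ := by
  obtain ⟨a, b⟩ := x; simp [sigT]

lemma mem_sigS {s : List (I →₀ ℕ)} {x : (_ : ℕ) × I} :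
    x ∈ sigS s ↔ x.1 < s.length ∧ x.2 ∈ (s.getD x.1 0).support := by
  obtain ⟨a, b⟩ := x; simp [sigS]

lemma uQ_eq (eu : I → ℝ) (s : List (I →₀ ℕ)) :
    uQ eu s = ∑ x ∈ sigS s, gfun eu s x :=
  (Finset.sum_sigma (Finset.range s.length) (fun j => (s.getD j 0).support)
    (gfun eu s)).symm

lemma uPos_eq (eu : I → ℝ) (s : List (I →₀ ℕ)) (t : List (Finset I)) (p : List ℕ) :
    uPos eu s t p = ∑ x ∈ sigT t, gfun eu s ⟨p.getD x.1 0, x.2⟩ :=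
  (Finset.sum_sigma (Finset.range t.length) (fun v => t.getD v ∅)
    (fun x => gfun eu s ⟨p.getD x.1 0, x.2⟩)).symm

lemma uRest_eq (eu : I → ℝ) (s : List (I →₀ ℕ)) (t : List (Finset I)) (k : ℕ) :
    uRest eu s t k = ∑ x ∈ sigS s,
      if k < x.1 ∨ (x.1 = k ∧ iLast t < (x.2 : WithBot I)) then gfun eu s x else 0 :=
  (Finset.sum_sigma (Finset.range s.length) (fun j => (s.getD j 0).support)
    (fun x => if k < x.1 ∨ (x.1 = k ∧ iLast t < (x.2 : WithBot I))
      then gfun eu s x else 0)).symm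

lemma uPos_nonneg (eu : I → ℝ) (heu : ∀ i, 0 < eu i) (s : List (I →₀ ℕ))
    (t : List (Finset I)) (p : List ℕ) : 0 ≤ uPos eu s t p :=
  Finset.sum_nonneg fun v _ => Finset.sum_nonneg fun i _ =>
    mul_nonneg (Nat.cast_nonneg _) (heu i).le

lemma uQ_nonneg (eu : I → ℝ) (heu : ∀ i, 0 < eu i) (s : List (I →₀ ℕ)) :
    0 ≤ uQ eu s :=
  Finset.sum_nonneg fun v _ => Finset.sum_nonneg fun i _ =>
    mul_nonneg (Nat.cast_nonneg _) (heu i).le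

lemma uRest_le_uQ (eu : I → ℝ) (heu : ∀ i, 0 < eu i) (s : List (I →₀ ℕ))
    (t : List (Finset I)) (k : ℕ) : uRest eu s t k ≤ uQ eu s := by
  rw [uRest_eq, uQ_eq]
  refine Finset.sum_le_sum fun x _ => ?_
  split_ifs
  · exact le_refl _
  · exact mul_nonneg (Nat.cast_nonneg _) (heu x.2).le

lemma inj_of_chain {p : List ℕ} (hch : p.Chain' (· < ·)) {L : ℕ}
    (hL : L ≤ p.length) {A : Finset ((_ : ℕ) × I)} (hA : ∀ x ∈ A, x.1 < L) :
    ∀ x ∈ A, ∀ y ∈ A,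
      (⟨p.getD x.1 0, x.2⟩ : (_ : ℕ) × I) = ⟨p.getD y.1 0, y.2⟩ → x = y := by
  intro x hx y hy hxy
  have hx1 : x.1 < L := hA _ hx
  have hy1 : y.1 < L := hA _ hy
  obtain ⟨x1, x2⟩ := x; obtain ⟨y1, y2⟩ := y
  have hx1' : x1 < L := hx1
  have hy1' : y1 < L := hy1
  obtain ⟨he1, he2⟩ := Sigma.mk.inj_iff.mp hxy
  have h1 : x1 = y1 := by
    rcases lt_trichotomy x1 y1 with h | h | h
    · exact absurd he1 (ne_of_lt (getD_lt_getD hch h (by omega)))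
    · exact h
    · exact absurd he1.symm (ne_of_lt (getD_lt_getD hch h (by omega)))
  subst h1
  have h2 : x2 = y2 := eq_of_heq he2
  subst h2
  rfl

lemma uPos_le_uQ (eu : I → ℝ) (heu : ∀ i, 0 < eu i) (s : List (I →₀ ℕ))
    (t : List (Finset I)) (p : List ℕ) (hp : IsInstance s t p) :
    uPos eu s t p ≤ uQ eu s := by
  obtain ⟨hplen, hch, hcond⟩ := hp
  rw [uPos_eq, uQ_eq]
  refine sum_comp_le (gfun eu s) (fun x => ⟨p.getD x.1 0, x.2⟩) ?_ ?_ ?_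
  · exact inj_of_chain hch (le_of_eq hplen.symm) (fun x hx => (mem_sigT.mp hx).1)
  · intro x hx
    obtain ⟨hx1, hx2⟩ := mem_sigT.mp hx
    exact mem_sigS.mpr ⟨(hcond x.1 hx1).1,
      Finsupp.mem_support_iff.mpr ((hcond x.1 hx1).2 x.2 hx2).ne'⟩
  · intro x _
    exact mul_nonneg (Nat.cast_nonneg _) (heu x.2).le

lemma PEUpos_nonneg (eu : I → ℝ) (heu : ∀ i, 0 < eu i) (s : List (I →₀ ℕ))
    (t : List (Finset I)) (p : List ℕ) : 0 ≤ PEUpos eu s t p := by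
  unfold PEUpos
  split_ifs with h
  · exact add_nonneg (uPos_nonneg eu heu s t p) h.le
  · exact le_refl 0

lemma PEUpos_le (eu : I → ℝ) (heu : ∀ i, 0 < eu i) (s : List (I →₀ ℕ))
    (t : List (Finset I)) (p : List ℕ) (hp : IsInstance s t p) :
    PEUpos eu s t p ≤ uQ eu s + uQ eu s := by
  unfold PEUpos
  split_ifs with h
  · exact add_le_add (uPos_le_uQ eu heu s t p hp) (uRest_le_uQ eu heu s t _)
  · have := uQ_nonneg eu heu s; linarith

lemma bddAbove_PEU (eu : I → ℝ) (heu : ∀ i, 0 < eu i) (s : List (I →₀ ℕ))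
    (t : List (Finset I)) :
    BddAbove {x | ∃ p, IsInstance s t p ∧ x = PEUpos eu s t p} := by
  refine ⟨uQ eu s + uQ eu s, ?_⟩
  rintro x ⟨p, hp, rfl⟩
  exact PEUpos_le eu heu s t p hp

lemma PEUseq_nonneg (eu : I → ℝ) (heu : ∀ i, 0 < eu i) (s : List (I →₀ ℕ))
    (t : List (Finset I)) : 0 ≤ PEUseq eu s t := by
  unfold PEUseq
  exact Real.sSup_nonneg (by rintro x ⟨p, hp, rfl⟩; exact PEUpos_nonneg eu heu s t p)

lemma core (eu : I → ℝ) (heu : ∀ i, 0 < eu i) (s : List (I →₀ ℕ))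
    {t β : List (Finset I)} {p : List ℕ}
    (hp : IsInstance s t p) (hq1 : 1 ≤ β.length) (hqt : β.length ≤ t.length)
    (hsub : ∀ v < β.length, β.getD v ∅ ⊆ t.getD v ∅)
    (hlast : ∀ v < β.length, ∀ i ∈ t.getD v ∅, i ∉ β.getD v ∅ →
      v = β.length - 1 ∧ iLast β < (i : WithBot I))
    (hwit : ∃ v i, v < t.length ∧ i ∈ t.getD v ∅ ∧
      ¬(v < β.length ∧ i ∈ β.getD v ∅)) :
    uPos eu s t p ≤ PEUpos eu s β (p.take β.length) := by
  obtain ⟨hplen, hch, hcond⟩ := hp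
  have hk : (p.take β.length).getLast?.getD 0 = p.getD (β.length - 1) 0 :=
    getLast_take hq1 (by omega)
  have htakeD : ∀ v < β.length, (p.take β.length).getD v 0 = p.getD v 0 := by
    intro v hv
    simp [List.getD_eq_getElem?_getD, List.getElem?_take, hv]
  have hA1A : sigT β ⊆ sigT t := by
    intro x hx
    rw [mem_sigT] at hx ⊢
    exact ⟨lt_of_lt_of_le hx.1 hqt, hsub x.1 hx.1 hx.2⟩
  have e2 : uPos eu s β (p.take β.length)
      = ∑ x ∈ sigT β, gfun eu s ⟨p.getD x.1 0, x.2⟩ := by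
    rw [uPos_eq]
    exact Finset.sum_congr rfl fun x hx => by
      rw [htakeD x.1 ((mem_sigT.mp hx).1)]
  have e4 : uPos eu s t p
      = ∑ x ∈ sigT t \ sigT β, gfun eu s ⟨p.getD x.1 0, x.2⟩
        + ∑ x ∈ sigT β, gfun eu s ⟨p.getD x.1 0, x.2⟩ := by
    rw [uPos_eq]
    exact (Finset.sum_sdiff hA1A).symm
  have hcondb : ∀ x ∈ sigT t \ sigT β,
      p.getD (β.length - 1) 0 < p.getD x.1 0 ∨
        (p.getD x.1 0 = p.getD (β.length - 1) 0 ∧ iLast β < (x.2 : WithBot I)) := by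
    intro x hx
    rw [Finset.mem_sdiff, mem_sigT, mem_sigT] at hx
    obtain ⟨⟨hx1, hx2⟩, hxn⟩ := hx
    by_cases hxq : x.1 < β.length
    · have h := hlast x.1 hxq x.2 hx2 (fun hmem => hxn ⟨hxq, hmem⟩)
      exact Or.inr ⟨by rw [h.1], h.2⟩
    · exact Or.inl (getD_lt_getD hch (by omega) (by omega))
  have hposb : ∀ x ∈ sigT t \ sigT β, 0 < gfun eu s ⟨p.getD x.1 0, x.2⟩ := by
    intro x hx
    rw [Finset.mem_sdiff, mem_sigT] at hx
    have h := (hcond x.1 hx.1.1).2 x.2 hx.1.2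
    exact mul_pos (by exact_mod_cast h) (heu x.2)
  obtain ⟨v₀, i₀, hv₀, hi₀, hn₀⟩ := hwit
  have hwit' : (⟨v₀, i₀⟩ : (_ : ℕ) × I) ∈ sigT t \ sigT β := by
    rw [Finset.mem_sdiff, mem_sigT, mem_sigT]
    exact ⟨⟨hv₀, hi₀⟩, hn₀⟩
  have e6 : 0 < ∑ x ∈ sigT t \ sigT β, gfun eu s ⟨p.getD x.1 0, x.2⟩ :=
    Finset.sum_pos' (fun x hx => (hposb x hx).le) ⟨_, hwit', hposb _ hwit'⟩
  have e5 : ∑ x ∈ sigT t \ sigT β, gfun eu s ⟨p.getD x.1 0, x.2⟩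
      ≤ uRest eu s β (p.getD (β.length - 1) 0) := by
    rw [uRest_eq]
    have hcongr : ∀ x ∈ sigT t \ sigT β,
        gfun eu s ⟨p.getD x.1 0, x.2⟩
          = (fun y : (_ : ℕ) × I =>
              if p.getD (β.length - 1) 0 < y.1 ∨
                (y.1 = p.getD (β.length - 1) 0 ∧ iLast β < (y.2 : WithBot I))
              then gfun eu s y else 0) ⟨p.getD x.1 0, x.2⟩ := by
      intro x hx
      exact (if_pos (hcondb x hx)).symm
    rw [Finset.sum_congr rfl hcongr]
    refine sum_comp_le
        (fun y : (_ : ℕ) × I =>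
          if p.getD (β.length - 1) 0 < y.1 ∨
            (y.1 = p.getD (β.length - 1) 0 ∧ iLast β < (y.2 : WithBot I))
          then gfun eu s y else 0)
        (fun x => ⟨p.getD x.1 0, x.2⟩) ?_ ?_ ?_
    · exact inj_of_chain hch (le_of_eq hplen.symm)
        (fun x hx => ((mem_sigT.mp (Finset.mem_sdiff.mp hx).1)).1)
    · intro x hx
      obtain ⟨hx1, hx2⟩ := mem_sigT.mp (Finset.mem_sdiff.mp hx).1
      exact mem_sigS.mpr ⟨(hcond x.1 hx1).1,
        Finsupp.mem_support_iff.mpr ((hcond x.1 hx1).2 x.2 hx2).ne'⟩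
    · intro x _
      beta_reduce
      split_ifs
      · exact mul_nonneg (Nat.cast_nonneg _) (heu x.2).le
      · exact le_refl 0
  have e7 : PEUpos eu s β (p.take β.length)
      = uPos eu s β (p.take β.length)
        + uRest eu s β (p.getD (β.length - 1) 0) := by
    unfold PEUpos
    rw [hk, if_pos (lt_of_lt_of_le e6 e5)]
  linarith [e2, e4, e5, e6, e7]

lemma main_pointwise (eu : I → ℝ) (heu : ∀ i, 0 < eu i) (s : List (I →₀ ℕ))
    {t t' : List (Finset I)} (ht' : ∀ X ∈ t', X.Nonempty) (h2 : 2 ≤ seqLen t')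
    (hpre : ExtPrefix t' t) {p : List ℕ} (hp : IsInstance s t p) :
    ∃ p', IsInstance s (parent t') p' ∧
      uPos eu s t p ≤ PEUpos eu s (parent t') p' := by
  obtain ⟨hq1, hqr, hsub, hlast, v₀, i₀, hv₀r, hi₀t, hi₀n⟩ := parent_spec ht' h2 hpre
  have hrt : t'.length ≤ t.length := hpre.2.1
  refine ⟨p.take (parent t').length, isInstance_take hp (le_trans hqr hrt) hsub, ?_⟩
  exact core eu heu s hp hq1 (le_trans hqr hrt) hsub hlast
    ⟨v₀, i₀, lt_of_lt_of_le hv₀r hrt, hi₀t, hi₀n⟩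

lemma extPrefix_refl {t' : List (Finset I)} (ht' : ∀ X ∈ t', X.Nonempty)
    (h2 : 2 ≤ seqLen t') : ExtPrefix t' t' := by
  have hne : t' ≠ [] := by
    intro hcon
    rw [hcon] at h2
    simp [seqLen] at h2
  have hlp : 0 < t'.length := List.length_pos_iff.mpr hne
  refine ⟨hne, le_refl _, fun v _ => rfl, ?_, subset_rfl, ?_⟩
  · rw [List.getD_eq_getElem t' ∅ (by omega : t'.length - 1 < t'.length)]
    exact ht' _ (List.getElem_mem _)
  · intro a ha
    exact absurd ha (by simp)

lemma per_seq (eu : I → ℝ) (heu : ∀ i, 0 < eu i) (s : List (I →₀ ℕ))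
    {t t' : List (Finset I)} (ht' : ∀ X ∈ t', X.Nonempty) (h2 : 2 ≤ seqLen t')
    (hpre : ExtPrefix t' t) (hc : Contains s t) :
    Contains s t' ∧ uSeq eu s t ≤ PEUseq eu s (parent t') := by
  obtain ⟨p0, hp0⟩ := hc
  have hsub' : ∀ v < t'.length, t'.getD v ∅ ⊆ t.getD v ∅ := by
    intro v hv
    rcases Nat.lt_or_ge v (t'.length - 1) with h | h
    · rw [hpre.2.2.1 v (by omega)]
    · have hv1 : v = t'.length - 1 := by omega
      rw [hv1]
      exact hpre.2.2.2.2.1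
  refine ⟨⟨p0.take t'.length, isInstance_take hp0 hpre.2.1 hsub'⟩, ?_⟩
  unfold uSeq PEUseq
  refine csSup_le ⟨uPos eu s t p0, p0, hp0, rfl⟩ ?_
  rintro x ⟨p1, hp1, rfl⟩
  obtain ⟨p', hp', hle⟩ := main_pointwise eu heu s ht' h2 hpre hp1
  exact le_trans hle (le_csSup (bddAbove_PEU eu heu s (parent t')) ⟨p', hp', rfl⟩)

/-- Theorem 2, RSU upper bound: `u(t) ≤ RSU(t')` over a database,
for a sequence `t'` with at least two item occurrences which is an extension-prefix
of `t` or equal to `t`. -/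
theorem uDB_le_RSUDB
    (eu : I → ℝ) (heu : ∀ i, 0 < eu i)
    (D : Multiset (List (I →₀ ℕ)))
    (t t' : List (Finset I))
    (ht : ∀ X ∈ t, X.Nonempty) (ht' : ∀ X ∈ t', X.Nonempty)
    (h2 : 2 ≤ seqLen t')
    (hpre : ExtPrefix t' t ∨ t' = t) :
    uDB eu D t ≤ RSUDB eu D t' := by
  have main : ∀ (t : List (Finset I)), ExtPrefix t' t → uDB eu D t ≤ RSUDB eu D t' := by
    intro t htp
    unfold uDB RSUDB
    refine Multiset.sum_map_le_sum_map _ _ fun s hs => ?_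
    by_cases hc : Contains s t
    · obtain ⟨hc', hle⟩ := per_seq eu heu s ht' h2 htp hc
      rw [if_pos hc]
      unfold RSUseq
      rw [if_pos hc']
      exact hle
    · rw [if_neg hc]
      unfold RSUseq
      split_ifs with h'
      · exact PEUseq_nonneg eu heu s (parent t')
      · exact le_refl 0
  rcases hpre with h | h
  · exact main t h
  · subst h
    exact main t' (extPrefix_refl ht' h2)

end TKUS
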